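/- Let Δ ⊂ ℝⁿ be a nondegenerate simplex with vertex index set N = {0,…,n}, and for nonempty K ⊂ N let b_K denote the barycenter of the face Δ_K. For every convex f : Δ → ℝ, Avg(f, Δ) ≤ (1/(n+1)) · Σ_{k=1}^{n+1} (1/C(n+1,k)) · Σ_{K ⊂ N, |K| = k} f(b_K). -/

import Mathlib

/-!
Let `w_0, …, w_n` be the barycentric coordinates on `Δ`. For a permutation `σ`, the chamber
`{w_{σ 0} ≥ ⋯ ≥ w_{σ n}}` is the simplex spanned by the face barycenters `b_{σ{0,…,k}}`, and its
barycentric coordinates are `λ_k = (k + 1) (w_{σ k} - w_{σ (k+1)})` (with `w_{σ (n+1)} = 0`).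
The `(n+1)!` chambers cover `Δ` and meet in null sets; the affine maps permuting the vertices of
`Δ` permute the chambers and preserve volume, so each chamber has volume `vol Δ / (n+1)!`.
Applied to a chamber, the same vertex-permutation argument shows that all its barycentric
coordinates have the same integral, `vol Δ / ((n+1)! (n+1))`. Integrating Jensen's inequality
`f ≤ ∑ λ_k f(b_{σ{0,…,k}})` over each chamber and counting how often each face `K` occurs as
`σ{0,…,|K|-1}` gives the bound.
-/

open MeasureTheory Finset

theorem Finset.exists_perm_map_eq {α : Type*} [DecidableEq α] {s t : Finset α} (h : #s = #t) :
    ∃ σ : Equiv.Perm α, s.map σ.toEmbedding = t := by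
  obtain ⟨σ, hσ⟩ := (Set.powersetCard.isPretransitive (α := α) (n := #t)).exists_smul_eq
    ⟨s, h⟩ ⟨t, rfl⟩
  exact ⟨σ, (map_eq_image _ _).trans (congrArg Subtype.val hσ)⟩

theorem Finset.card_choose_nsmul_sum_perm_map {α M : Type*} [Fintype α] [DecidableEq α]
    [AddCommMonoid M] (s : Finset α) (g : Finset α → M) :
    (Fintype.card α).choose #s • ∑ σ : Equiv.Perm α, g (s.map σ.toEmbedding) =
      (Fintype.card α).factorial • ∑ t ∈ powersetCard #s univ, g t := by
  have horbit : ∀ t ∈ powersetCard #s univ, ∑ σ : Equiv.Perm α, g (t.map σ.toEmbedding) =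
      ∑ σ : Equiv.Perm α, g (s.map σ.toEmbedding) := by
    intro t ht
    obtain ⟨π, rfl⟩ := exists_perm_map_eq (mem_powersetCard_univ.mp ht).symm
    simp only [map_map]
    exact Equiv.sum_comp (Equiv.mulRight π) fun σ => g (s.map σ.toEmbedding)
  have hinvariant : ∀ σ : Equiv.Perm α,
      ∑ t ∈ powersetCard #s univ, g (t.map σ.toEmbedding) = ∑ t ∈ powersetCard #s univ, g t := by
    intro σ
    have := sum_map (powersetCard #s univ) (mapEmbedding σ.toEmbedding).toEmbedding g
    rw [← powersetCard_map, map_univ_equiv] at this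
    exact this.symm
  calc (Fintype.card α).choose #s • ∑ σ : Equiv.Perm α, g (s.map σ.toEmbedding)
      = ∑ t ∈ powersetCard #s univ, ∑ σ : Equiv.Perm α, g (t.map σ.toEmbedding) := by
        rw [sum_congr rfl horbit, sum_const, card_powersetCard, card_univ]
    _ = (Fintype.card α).factorial • ∑ t ∈ powersetCard #s univ, g t := by
        rw [sum_comm, sum_congr rfl fun σ _ => hinvariant σ, sum_const, card_univ,
          Fintype.card_perm]

theorem Finset.sum_fin_succ_eq_sum_Icc {M : Type*} [AddCommMonoid M] (n : ℕ) (F : ℕ → M) :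
    ∑ k : Fin (n + 1), F (k + 1) = ∑ k ∈ Icc 1 (n + 1), F k := by
  rw [Fin.sum_univ_eq_sum_range (fun k => F (k + 1)), range_eq_Ico, sum_Ico_add']
  rfl

theorem Finset.centroid_eq_inv_card_smul_sum {ι E : Type*} [AddCommGroup E] [Module ℝ E]
    {s : Finset ι} (hs : s.Nonempty) (p : ι → E) :
    s.centroid ℝ p = (#s : ℝ)⁻¹ • ∑ i ∈ s, p i := by
  rw [centroid_eq_centerMass s hs, centerMass, sum_centroidWeights_eq_one_of_nonempty ℝ s hs,
    inv_one, one_smul, smul_sum]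
  rfl

theorem AffineMap.addHaar_image {E : Type*} [NormedAddCommGroup E] [NormedSpace ℝ E]
    [FiniteDimensional ℝ E] [MeasurableSpace E] [BorelSpace E] (μ : Measure E)
    [μ.IsAddHaarMeasure] (A : E →ᵃ[ℝ] E) (s : Set E) :
    μ (A '' s) = ENNReal.ofReal |LinearMap.det A.linear| * μ s := by
  have hA : ⇑A = (A 0 + ·) ∘ A.linear := by
    ext v
    rw [A.decomp]
    simp [add_comm]
  rw [hA, Set.image_comp, Set.image_add_left, measure_preimage_add, μ.addHaar_image_linearMap]

namespace AffineBasis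

section Dual

variable {ι k V P : Type*} [Fintype ι] [Field k] [AddCommGroup V] [Module k V] [AddTorsor V P]

theorem sum_coord_mul_apply (b : AffineBasis ι k P) (g : P →ᵃ[k] k) (q : P) :
    ∑ j, b.coord j q * g (b j) = g q := by
  conv_rhs => rw [← b.affineCombination_coord_eq_self q]
  rw [univ.map_affineCombination _ _ (b.sum_coord_apply_eq_one q),
    univ.affineCombination_eq_linear_combination _ _ (b.sum_coord_apply_eq_one q)]
  rfl

variable [DecidableEq ι]

theorem toMatrix_mul_eq_one_of_dual (b : AffineBasis ι k P) {p : ι → P}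
    {g : ι → P →ᵃ[k] k} (h : ∀ i j, g i (p j) = if i = j then 1 else 0) :
    b.toMatrix p * Matrix.of (fun j i => g i (b j)) = 1 := by
  ext m i
  simp only [Matrix.mul_apply, toMatrix_apply, Matrix.of_apply, b.sum_coord_mul_apply, h,
    Matrix.one_apply, eq_comm]

/-- Independence comes from the dual functionals `g`, spanning from comparison with `b`. -/
noncomputable def ofDual (b : AffineBasis ι k P) (p : ι → P) (g : ι → P →ᵃ[k] k)
    (h : ∀ i j, g i (p j) = if i = j then 1 else 0) : AffineBasis ι k P :=
  ⟨p, b.affineIndependent_of_toMatrix_right_inv p (b.toMatrix_mul_eq_one_of_dual h),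
    b.affineSpan_eq_top_of_toMatrix_left_inv p
      (mul_eq_one_comm.mp (b.toMatrix_mul_eq_one_of_dual h))⟩

variable (b : AffineBasis ι k P) {p : ι → P} {g : ι → P →ᵃ[k] k}
  (h : ∀ i j, g i (p j) = if i = j then 1 else 0)

@[simp]
theorem coe_ofDual : ⇑(b.ofDual p g h) = p := by rfl

@[simp]
theorem coord_ofDual (i : ι) : (b.ofDual p g h).coord i = g i :=
  AffineMap.ext_on (b.ofDual p g h).tot fun _ ⟨j, hj⟩ => by
    rw [← hj, coord_apply, coe_ofDual, h]

end Dual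

section Simplex

variable {ι E : Type*} [NormedAddCommGroup E] [NormedSpace ℝ E] (b : AffineBasis ι ℝ E)
  {f : E → ℝ}

theorem coord_nonneg_of_mem_convexHull {y : E} (hy : y ∈ convexHull ℝ (Set.range b)) (i : ι) :
    0 ≤ b.coord i y := by
  rw [b.convexHull_eq_nonneg_coord] at hy
  exact hy i

theorem addHaar_setOf_coord_eq [FiniteDimensional ℝ E] [MeasurableSpace E] [BorelSpace E]
    (μ : Measure E) [μ.IsAddHaarMeasure] {i j : ι} (hij : i ≠ j) :
    μ {y | b.coord i y = b.coord j y} = 0 := by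
  let H := AffineSubspace.comap (b.coord i - b.coord j) (⊥ : Submodule ℝ ℝ).toAffineSubspace
  have hH : {y | b.coord i y = b.coord j y} = (H : Set E) := by
    ext y
    simp [H, sub_eq_zero]
  rw [hH]
  refine Measure.addHaar_affineSubspace μ H fun htop => ?_
  have : b i ∈ H := htop ▸ AffineSubspace.mem_top ℝ E (b i)
  simp [H, b.coord_apply_eq, b.coord_apply_ne hij.symm] at this

variable [Fintype ι]

theorem isCompact_convexHull : IsCompact (convexHull ℝ (Set.range b)) :=
  (Set.finite_range b).isCompact_convexHull ℝ

theorem _root_.ConvexOn.le_sum_coord_mul (hf : ConvexOn ℝ (convexHull ℝ (Set.range b)) f)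
    {y : E} (hy : y ∈ convexHull ℝ (Set.range b)) : f y ≤ ∑ i, b.coord i y * f (b i) := by
  have h := hf.map_sum_le (fun i _ => b.coord_nonneg_of_mem_convexHull hy i)
    (b.sum_coord_apply_eq_one y) fun i _ => subset_convexHull ℝ _ (Set.mem_range_self i)
  rwa [b.linear_combination_coord_eq_self] at h

theorem _root_.ConvexOn.bddAbove_image_convexHull
    (hf : ConvexOn ℝ (convexHull ℝ (Set.range b)) f) :
    BddAbove (f '' convexHull ℝ (Set.range b)) := by
  have := b.nonempty
  refine ⟨univ.sup' univ_nonempty (f ∘ b), ?_⟩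
  rintro _ ⟨y, hy, rfl⟩
  obtain ⟨_, ⟨i, rfl⟩, hi⟩ := hf.exists_ge_of_mem_convexHull (subset_convexHull ℝ _) hy
  exact hi.trans (le_sup' (f ∘ b) (mem_univ i))

theorem _root_.ConvexOn.bddBelow_image_convexHull
    (hf : ConvexOn ℝ (convexHull ℝ (Set.range b)) f) :
    BddBelow (f '' convexHull ℝ (Set.range b)) := by
  obtain ⟨U, hU⟩ := hf.bddAbove_image_convexHull
  set N : ℝ := (Fintype.card ι : ℝ)
  have hN : 0 < N := by have := b.nonempty; positivity
  set c := univ.centroid ℝ b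
  refine ⟨(N + 1) * f c - N * U, ?_⟩
  rintro _ ⟨y, hy, rfl⟩
  -- `c = (N z + y) / (N + 1)` for a point `z` of the simplex, so `f c ≤ (N U + f y) / (N + 1)`.
  obtain ⟨z, hz_def⟩ : ∃ z, z = AffineMap.lineMap y c ((N + 1) / N) := ⟨_, rfl⟩
  have hz : z ∈ convexHull ℝ (Set.range b) := by
    rw [b.convexHull_eq_nonneg_coord]
    intro i
    have hyi : b.coord i y ≤ 1 := by
      rw [← b.sum_coord_apply_eq_one y]
      exact single_le_sum (fun j _ => b.coord_nonneg_of_mem_convexHull hy j) (mem_univ i)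
    have : b.coord i z = ((N + 1) - N * b.coord i y) / N ^ 2 := by
      rw [hz_def, AffineMap.apply_lineMap, AffineMap.lineMap_apply_module,
        b.coord_apply_centroid (mem_univ i), card_univ, smul_eq_mul, smul_eq_mul]
      change (1 - (N + 1) / N) * b.coord i y + (N + 1) / N * N⁻¹ = _
      field_simp
      ring
    rw [this]
    exact div_nonneg (by nlinarith) (by positivity)
  have hcomb : (N / (N + 1)) • z + (1 / (N + 1)) • y = c := by
    rw [hz_def, AffineMap.lineMap_apply_module]
    match_scalars <;> field_simp
    ring
  have hjensen := hf.2 hz hy (show 0 ≤ N / (N + 1) by positivity)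
    (show 0 ≤ 1 / (N + 1) by positivity) (by field_simp)
  rw [hcomb, smul_eq_mul, smul_eq_mul] at hjensen
  have hfz := hU ⟨_, hz, rfl⟩
  field_simp at hjensen
  nlinarith

noncomputable def permMap (τ : Equiv.Perm ι) : E →ᵃ[ℝ] E :=
  (Fintype.linearCombination ℝ (b ∘ τ)).toAffineMap.comp b.coords

@[simp]
theorem permMap_apply_basis (τ : Equiv.Perm ι) (i : ι) : b.permMap τ (b i) = b (τ i) := by
  classical
  have : b.coords (b i) = Pi.single i 1 := by
    ext j
    simp [coords_apply, coord_apply, Pi.single_apply]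
  simp [permMap, this]

theorem permMap_comp (σ τ : Equiv.Perm ι) :
    (b.permMap σ).comp (b.permMap τ) = b.permMap (τ.trans σ) :=
  AffineMap.ext_on b.tot fun _ ⟨i, hi⟩ => by simp [← hi]

theorem permMap_refl : b.permMap (Equiv.refl ι) = AffineMap.id ℝ E :=
  AffineMap.ext_on b.tot fun _ ⟨i, hi⟩ => by simp [← hi]

theorem permMap_symm_apply (τ : Equiv.Perm ι) (y : E) :
    b.permMap τ.symm (b.permMap τ y) = y := by
  rw [← AffineMap.comp_apply, permMap_comp, Equiv.self_trans_symm, permMap_refl,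
    AffineMap.id_apply]

theorem permMap_apply_symm (τ : Equiv.Perm ι) (y : E) :
    b.permMap τ (b.permMap τ.symm y) = y := by
  simpa using b.permMap_symm_apply τ.symm y

theorem coord_comp_permMap (τ : Equiv.Perm ι) (i : ι) :
    (b.coord i).comp (b.permMap τ) = b.coord (τ.symm i) :=
  AffineMap.ext_on b.tot fun _ ⟨j, hj⟩ => by
    classical
    simp only [← hj, AffineMap.comp_apply, permMap_apply_basis, coord_apply, Equiv.symm_apply_eq]

theorem image_convexHull_permMap (τ : Equiv.Perm ι) :
    b.permMap τ '' convexHull ℝ (Set.range b) = convexHull ℝ (Set.range b) := by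
  rw [AffineMap.image_convexHull, ← Set.range_comp]
  congr 1
  simpa [Function.comp_def] using
    (Set.range_comp b τ).trans (by rw [τ.range_eq_univ, Set.image_univ])

variable [MeasurableSpace E] (μ : Measure E) [μ.IsAddHaarMeasure]

theorem addHaar_convexHull_pos : 0 < μ (convexHull ℝ (Set.range b)) :=
  μ.measure_pos_of_nonempty_interior ⟨_, b.centroid_mem_interior_convexHull⟩

theorem addHaar_convexHull_lt_top : μ (convexHull ℝ (Set.range b)) < ⊤ :=
  b.isCompact_convexHull.measure_lt_top

variable [FiniteDimensional ℝ E] [BorelSpace E]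

theorem _root_.ConvexOn.integrableOn_convexHull (hf : ConvexOn ℝ (convexHull ℝ (Set.range b)) f) :
    IntegrableOn f (convexHull ℝ (Set.range b)) μ := by
  obtain ⟨U, hU⟩ := hf.bddAbove_image_convexHull
  obtain ⟨L, hL⟩ := hf.bddBelow_image_convexHull
  have hmeas : AEStronglyMeasurable f (μ.restrict (convexHull ℝ (Set.range b))) := by
    rw [Measure.restrict_congr_set (interior_ae_eq_of_null_frontier
      ((convex_convexHull ℝ _).addHaar_frontier μ)).symm]
    exact hf.continuousOn_interior.aestronglyMeasurable isOpen_interior.measurableSet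
  refine .of_bound b.isCompact_convexHull.measure_lt_top hmeas (max |U| |L|)
    (ae_restrict_of_forall_mem b.isCompact_convexHull.measurableSet fun y hy => ?_)
  have := hU ⟨y, hy, rfl⟩
  have := hL ⟨y, hy, rfl⟩
  rw [Real.norm_eq_abs, abs_le]
  constructor <;> cases abs_cases U <;> cases abs_cases L <;>
    linarith [le_max_left |U| |L|, le_max_right |U| |L|]

theorem addHaar_image_permMap (τ : Equiv.Perm ι) (s : Set E) : μ (b.permMap τ '' s) = μ s := by
  have h := (b.permMap τ).addHaar_image μ (convexHull ℝ (Set.range b))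
  rw [b.image_convexHull_permMap, eq_comm,
    ENNReal.mul_eq_right (b.addHaar_convexHull_pos μ).ne' (b.addHaar_convexHull_lt_top μ).ne] at h
  rw [AffineMap.addHaar_image, h, one_mul]

theorem measurePreserving_permMap (τ : Equiv.Perm ι) : MeasurePreserving (b.permMap τ) μ μ := by
  refine ⟨(b.permMap τ).continuous_of_finiteDimensional.measurable, Measure.ext fun s hs => ?_⟩
  rw [Measure.map_apply (b.permMap τ).continuous_of_finiteDimensional.measurable hs,
    ← Set.image_eq_preimage_of_inverse (b.permMap_apply_symm τ) (b.permMap_symm_apply τ),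
    addHaar_image_permMap]

theorem measurableEmbedding_permMap (τ : Equiv.Perm ι) : MeasurableEmbedding (b.permMap τ) :=
  (Homeomorph.mk ⟨b.permMap τ, b.permMap τ.symm, b.permMap_symm_apply τ, b.permMap_apply_symm τ⟩
    (b.permMap τ).continuous_of_finiteDimensional
    (b.permMap τ.symm).continuous_of_finiteDimensional).measurableEmbedding

theorem setIntegral_coord_eq (i j : ι) :
    ∫ y in convexHull ℝ (Set.range b), b.coord i y ∂μ =
      ∫ y in convexHull ℝ (Set.range b), b.coord j y ∂μ := by
  classical
  set τ := Equiv.swap i j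
  conv_lhs => rw [← b.image_convexHull_permMap τ]
  rw [(b.measurePreserving_permMap μ τ).setIntegral_image_emb (b.measurableEmbedding_permMap τ)]
  simp_rw [← AffineMap.comp_apply, coord_comp_permMap, τ, Equiv.symm_swap, Equiv.swap_apply_left]

theorem setIntegral_coord (i : ι) :
    ∫ y in convexHull ℝ (Set.range b), b.coord i y ∂μ =
      μ.real (convexHull ℝ (Set.range b)) / Fintype.card ι := by
  have hint : ∀ j, IntegrableOn (b.coord j) (convexHull ℝ (Set.range b)) μ := fun j =>
    (b.coord j).continuous_of_finiteDimensional.continuousOn.integrableOn_compact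
      b.isCompact_convexHull
  have hsum := integral_finsetSum univ fun j _ => hint j
  simp_rw [b.sum_coord_apply_eq_one, fun j => b.setIntegral_coord_eq μ j i] at hsum
  rw [setIntegral_const, smul_eq_mul, mul_one, sum_const, card_univ, nsmul_eq_mul] at hsum
  have : (Fintype.card ι : ℝ) ≠ 0 := by
    have := b.nonempty
    positivity
  rw [hsum]
  field_simp

end Simplex

section Chamber

variable {n : ℕ} {E : Type*} [NormedAddCommGroup E] [NormedSpace ℝ E]
  (b : AffineBasis (Fin (n + 1)) ℝ E) (σ : Equiv.Perm (Fin (n + 1)))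

noncomputable def chamberVertex (k : Fin (n + 1)) : E :=
  ((Iic k).map σ.toEmbedding).centroid ℝ b

noncomputable def orderedCoord (j : ℕ) : E →ᵃ[ℝ] ℝ :=
  if h : j < n + 1 then b.coord (σ ⟨j, h⟩) else 0

noncomputable def chamberCoord (k : Fin (n + 1)) : E →ᵃ[ℝ] ℝ :=
  ((k : ℝ) + 1) • (b.orderedCoord σ k - b.orderedCoord σ (k + 1))

theorem orderedCoord_val (k : Fin (n + 1)) : b.orderedCoord σ k = b.coord (σ k) :=
  dif_pos k.isLt

theorem orderedCoord_of_le {j : ℕ} (hj : n + 1 ≤ j) : b.orderedCoord σ j = 0 :=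
  dif_neg (by omega)

theorem orderedCoord_chamberVertex (j : ℕ) (m : Fin (n + 1)) :
    b.orderedCoord σ j (b.chamberVertex σ m) = if j ≤ m then ((m : ℝ) + 1)⁻¹ else 0 := by
  have hcard : #((Iic m).map σ.toEmbedding) = (m : ℕ) + 1 := by simp
  unfold orderedCoord chamberVertex
  split_ifs with hj hjm hjm
  · rw [b.coord_apply_centroid (by simpa [Fin.le_def] using hjm), hcard]
    push_cast
    rfl
  · rw [centroid_def, b.coord_apply_combination_of_notMem ?_
      (sum_centroidWeights_eq_one_of_card_eq_add_one ℝ _ hcard)]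
    simpa [Fin.le_def] using hjm
  · omega
  · rfl

theorem chamberCoord_chamberVertex (k m : Fin (n + 1)) :
    b.chamberCoord σ k (b.chamberVertex σ m) = if k = m then 1 else 0 := by
  simp only [chamberCoord, AffineMap.coe_smul, AffineMap.coe_sub, Pi.smul_apply, Pi.sub_apply,
    smul_eq_mul, orderedCoord_chamberVertex, Fin.ext_iff]
  rcases lt_trichotomy (k : ℕ) m with h | h | h
  · rw [if_pos h.le, if_pos (show (k : ℕ) + 1 ≤ m by omega), if_neg h.ne]
    ring
  · rw [h, if_pos le_rfl, if_neg (by omega), if_pos rfl]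
    field_simp
    ring
  · rw [if_neg (by omega), if_neg (by omega), if_neg h.ne']
    ring

noncomputable def chamberBasis : AffineBasis (Fin (n + 1)) ℝ E :=
  b.ofDual (b.chamberVertex σ) (b.chamberCoord σ) (b.chamberCoord_chamberVertex σ)

def chamber : Set E := convexHull ℝ (Set.range (b.chamberBasis σ))

theorem mem_chamber_iff {y : E} :
    y ∈ b.chamber σ ↔ Antitone fun j => b.orderedCoord σ j y := by
  rw [chamber, convexHull_eq_nonneg_coord, Set.mem_ofPred_eq]
  simp only [chamberBasis, coord_ofDual, chamberCoord, AffineMap.coe_smul, AffineMap.coe_sub,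
    Pi.smul_apply, Pi.sub_apply, smul_eq_mul]
  constructor
  · refine fun h => antitone_nat_of_succ_le fun j => ?_
    by_cases hj : j < n + 1
    · have := h ⟨j, hj⟩
      dsimp only at this
      nlinarith
    · rw [orderedCoord_of_le _ _ (by omega), orderedCoord_of_le _ _ (by omega)]
  · intro h k
    have := h (Nat.le_succ k)
    have : (0 : ℝ) ≤ k + 1 := by positivity
    nlinarith

theorem antitone_coord_of_mem_chamber {y : E} (hy : y ∈ b.chamber σ) :
    Antitone fun k => b.coord (σ k) y := fun k l hkl => by
  simpa only [orderedCoord_val] using (b.mem_chamber_iff σ).mp hy (Fin.le_def.mp hkl)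

theorem chamber_subset_convexHull : b.chamber σ ⊆ convexHull ℝ (Set.range b) := by
  intro y hy
  rw [convexHull_eq_nonneg_coord]
  intro i
  have : b.orderedCoord σ (n + 1) y ≤ b.orderedCoord σ (σ.symm i) y :=
    (b.mem_chamber_iff σ).mp hy (show (σ.symm i : ℕ) ≤ n + 1 by omega)
  rwa [orderedCoord_val, orderedCoord_of_le _ _ le_rfl, σ.apply_symm_apply] at this

theorem exists_mem_chamber {y : E} (hy : y ∈ convexHull ℝ (Set.range b)) :
    ∃ σ, y ∈ b.chamber σ := by
  let w : Fin (n + 1) → ℝᵒᵈ := fun i => OrderDual.toDual (b.coord i y)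
  refine ⟨Tuple.sort w, (b.mem_chamber_iff _).mpr fun i j hij => ?_⟩
  dsimp only
  by_cases hj : j < n + 1
  · rw [← Fin.val_mk hj, orderedCoord_val, ← Fin.val_mk (hij.trans_lt hj), orderedCoord_val]
    exact Tuple.monotone_sort w (show (⟨i, _⟩ : Fin (n + 1)) ≤ ⟨j, hj⟩ from hij)
  · rw [orderedCoord_of_le _ _ (by omega)]
    unfold orderedCoord
    split_ifs
    · exact b.coord_nonneg_of_mem_convexHull hy _
    · exact le_rfl

theorem exists_coord_eq_of_mem_chamber_inter {σ τ : Equiv.Perm (Fin (n + 1))} (hστ : σ ≠ τ)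
    {y : E} (hσ : y ∈ b.chamber σ) (hτ : y ∈ b.chamber τ) :
    ∃ i j, i ≠ j ∧ b.coord i y = b.coord j y := by
  by_contra! h
  let w : Fin (n + 1) → ℝᵒᵈ := fun i => OrderDual.toDual (b.coord i y)
  have hw := Tuple.unique_monotone (f := w) (b.antitone_coord_of_mem_chamber σ hσ).dual_right
    (b.antitone_coord_of_mem_chamber τ hτ).dual_right
  exact hστ <| Equiv.ext fun k => by_contra fun hk => h _ _ hk (congrFun hw k)

theorem iUnion_chamber : ⋃ σ, b.chamber σ = convexHull ℝ (Set.range b) :=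
  subset_antisymm (Set.iUnion_subset b.chamber_subset_convexHull) fun _ hy =>
    Set.mem_iUnion.mpr (b.exists_mem_chamber hy)

theorem permMap_chamberVertex_refl (k : Fin (n + 1)) :
    b.permMap σ (b.chamberVertex (Equiv.refl _) k) = b.chamberVertex σ k := by
  have hw := (Iic k).sum_centroidWeights_eq_one_of_nonempty ℝ nonempty_Iic
  have hb : ⇑(b.permMap σ) ∘ ⇑b = ⇑b ∘ σ.toEmbedding := funext fun i => by simp
  rw [chamberVertex, chamberVertex, Equiv.refl_toEmbedding, map_refl, centroid_map, centroid_def,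
    centroid_def, map_affineCombination _ _ _ hw, hb]

theorem image_permMap_chamber_refl : b.permMap σ '' b.chamber (Equiv.refl _) = b.chamber σ := by
  rw [chamber, AffineMap.image_convexHull, ← Set.range_comp]
  congr 2
  ext k
  exact b.permMap_chamberVertex_refl σ k

theorem sum_perm_chamberVertex (f : E → ℝ) (k : Fin (n + 1)) :
    ∑ σ, f (b.chamberVertex σ k) = (n + 1).factorial / ((n + 1).choose (k + 1)) *
      ∑ K ∈ powersetCard (k + 1) univ, f (K.centroid ℝ b) := by
  have h := (Iic k).card_choose_nsmul_sum_perm_map fun K => f (K.centroid ℝ b)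
  simp only [Fintype.card_fin, Fin.card_Iic, nsmul_eq_mul] at h
  have hC : ((n + 1).choose (k + 1) : ℝ) ≠ 0 := Nat.cast_ne_zero.mpr (Nat.choose_pos k.isLt).ne'
  rw [div_mul_eq_mul_div, eq_div_iff hC, mul_comm]
  exact h

variable [MeasurableSpace E] [BorelSpace E]

theorem measurableSet_chamber : MeasurableSet (b.chamber σ) :=
  (b.chamberBasis σ).isCompact_convexHull.isClosed.measurableSet

variable [FiniteDimensional ℝ E] (μ : Measure E) [μ.IsAddHaarMeasure] {f : E → ℝ}

theorem addHaar_chamber_inter {σ τ : Equiv.Perm (Fin (n + 1))} (hστ : σ ≠ τ) :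
    μ (b.chamber σ ∩ b.chamber τ) = 0 := by
  refine measure_mono_null (t := ⋃ (i) (j) (_ : i ≠ j), {y | b.coord i y = b.coord j y})
    (fun y ⟨hσ, hτ⟩ => ?_) (measure_iUnion_null fun i => measure_iUnion_null fun j =>
      measure_iUnion_null fun hij => b.addHaar_setOf_coord_eq μ hij)
  obtain ⟨i, j, hij, hy⟩ := b.exists_coord_eq_of_mem_chamber_inter hστ hσ hτ
  simp only [Set.mem_iUnion]
  exact ⟨i, j, hij, hy⟩

theorem setIntegral_convexHull_eq_sum_chamber {g : E → ℝ}
    (hg : IntegrableOn g (convexHull ℝ (Set.range b)) μ) :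
    ∫ y in convexHull ℝ (Set.range b), g y ∂μ = ∑ σ, ∫ y in b.chamber σ, g y ∂μ := by
  rw [← b.iUnion_chamber,
    integral_iUnion_ae (fun σ => (b.measurableSet_chamber σ).nullMeasurableSet)
      (fun σ τ hστ => b.addHaar_chamber_inter μ hστ) (by rwa [b.iUnion_chamber]),
    tsum_fintype]

theorem measureReal_chamber :
    μ.real (b.chamber σ) = μ.real (convexHull ℝ (Set.range b)) / (n + 1).factorial := by
  have hrefl : ∀ τ, μ (b.chamber τ) = μ (b.chamber (Equiv.refl _)) := fun τ => by
    rw [← b.image_permMap_chamber_refl τ, addHaar_image_permMap]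
  have hsum := measure_iUnion₀ (μ := μ) (fun σ τ hστ => b.addHaar_chamber_inter μ hστ)
    (fun σ => (b.measurableSet_chamber σ).nullMeasurableSet)
  rw [b.iUnion_chamber, tsum_fintype, sum_congr rfl fun τ _ => hrefl τ, sum_const, card_univ,
    Fintype.card_perm, Fintype.card_fin, nsmul_eq_mul] at hsum
  rw [measureReal_def, measureReal_def, hsum, ENNReal.toReal_mul, ENNReal.toReal_natCast,
    hrefl σ]
  field_simp

theorem setIntegral_chamber_le (hf : ConvexOn ℝ (convexHull ℝ (Set.range b)) f) :
    ∫ y in b.chamber σ, f y ∂μ ≤ μ.real (convexHull ℝ (Set.range b)) /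
      ((n + 1).factorial * (n + 1)) * ∑ k, f (b.chamberVertex σ k) := by
  let c := b.chamberBasis σ
  have hc : convexHull ℝ (Set.range c) = b.chamber σ := rfl
  have hcoord : ∀ k, IntegrableOn (fun y => c.coord k y * f (c k)) (b.chamber σ) μ := fun k =>
    ((c.coord k).continuous_of_finiteDimensional.continuousOn.integrableOn_compact
      c.isCompact_convexHull).mul_const _
  calc ∫ y in b.chamber σ, f y ∂μ
      ≤ ∫ y in b.chamber σ, ∑ k, c.coord k y * f (c k) ∂μ :=
        setIntegral_mono_on ((hf.integrableOn_convexHull b μ).mono_set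
          (b.chamber_subset_convexHull σ)) (integrable_finsetSum _ fun k _ => hcoord k)
          (b.measurableSet_chamber σ) fun y hy =>
            (hf.subset (b.chamber_subset_convexHull σ) (convex_convexHull ℝ _)).le_sum_coord_mul
              c hy
    _ = ∑ k, (∫ y in b.chamber σ, c.coord k y ∂μ) * f (c k) := by
        rw [integral_finsetSum _ fun k _ => hcoord k]
        simp_rw [integral_mul_const]
    _ = _ := by
        simp_rw [← hc, c.setIntegral_coord μ, hc, measureReal_chamber, Fintype.card_fin, mul_sum,
          div_div]
        push_cast
        rfl

theorem setAverage_le_sum_centroid (hf : ConvexOn ℝ (convexHull ℝ (Set.range b)) f) :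
    ⨍ y in convexHull ℝ (Set.range b), f y ∂μ ≤ 1 / ((n : ℝ) + 1) *
      ∑ k ∈ Icc 1 (n + 1), ((n + 1).choose k : ℝ)⁻¹ *
        ∑ K ∈ powersetCard k univ, f (K.centroid ℝ b) := by
  have hV : 0 < μ.real (convexHull ℝ (Set.range b)) :=
    ENNReal.toReal_pos (b.addHaar_convexHull_pos μ).ne' (b.addHaar_convexHull_lt_top μ).ne
  rw [setAverage_eq, smul_eq_mul,
    b.setIntegral_convexHull_eq_sum_chamber μ (hf.integrableOn_convexHull b μ),
    ← sum_fin_succ_eq_sum_Icc]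
  calc _ ≤ (μ.real (convexHull ℝ (Set.range b)))⁻¹ * ∑ σ,
        μ.real (convexHull ℝ (Set.range b)) / ((n + 1).factorial * (n + 1)) *
          ∑ k, f (b.chamberVertex σ k) :=
        mul_le_mul_of_nonneg_left (sum_le_sum fun σ _ => b.setIntegral_chamber_le σ μ hf)
          (inv_nonneg.mpr hV.le)
    _ = _ := by
        rw [← mul_sum, sum_comm, ← mul_assoc]
        simp_rw [sum_perm_chamberVertex, mul_sum]
        refine sum_congr rfl fun k _ => sum_congr rfl fun K _ => ?_
        field_simp

end Chamber

end AffineBasis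

theorem avg_le_sum_face_barycenters (n : ℕ) (x : Fin (n + 1) → EuclideanSpace ℝ (Fin n))
    (hx : AffineIndependent ℝ x) (f : EuclideanSpace ℝ (Fin n) → ℝ)
    (hf : ConvexOn ℝ (convexHull ℝ (Set.range x)) f) :
    (⨍ y in convexHull ℝ (Set.range x), f y) ≤
      (1 / ((n : ℝ) + 1)) *
        ∑ k ∈ Finset.Icc 1 (n + 1),
          (((n + 1).choose k : ℝ))⁻¹ *
            ∑ K ∈ Finset.powersetCard k (Finset.univ : Finset (Fin (n + 1))),
              f ((K.card : ℝ)⁻¹ • ∑ i ∈ K, x i) := by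
  obtain ⟨b, rfl⟩ : ∃ b : AffineBasis (Fin (n + 1)) ℝ (EuclideanSpace ℝ (Fin n)), ⇑b = x :=
    ⟨⟨x, hx, hx.affineSpan_eq_top_iff_card_eq_finrank_add_one.mpr (by simp)⟩, rfl⟩
  convert b.setAverage_le_sum_centroid volume hf using 5 with k hk K hK
  have hK_nonempty : K.Nonempty := by
    rw [← Finset.card_pos, (Finset.mem_powersetCard.mp hK).2]
    exact (Finset.mem_Icc.mp hk).1
  rw [Finset.centroid_eq_inv_card_smul_sum hK_nonempty]
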